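/- If K is a sick compactum, then every closed subspace of K that is not metrizable contains a subspace homeomorphic to βℕ. Equivalently, every nonmetrizable closed subset S ⊆ K admits a topological embedding of βℕ into S. -/

import Mathlib

open MeasureTheory Topology Filter Set

theorem metrizable_of_sep {X : Type*} [TopologicalSpace X] [CompactSpace X] [T2Space X]
    {ι : Type} [Countable ι] (F : ι → X → ℝ) (hc : ∀ i, Continuous (F i))
    (hsep : ∀ x y : X, (∀ i, F i x = F i y) → x = y) :
    TopologicalSpace.MetrizableSpace X := by
  have hΦ : Continuous (fun x (i : ι) => F i x) := continuous_pi fun i => hc i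
  have hinj : Function.Injective (fun x (i : ι) => F i x) := fun x y h =>
    hsep x y fun i => congrFun h i
  exact (hΦ.isClosedEmbedding hinj).isEmbedding.metrizableSpace

theorem exists_discrete_seq {K : Type*} [TopologicalSpace K] [CompactSpace K] [T2Space K]
    {A : Set K} (hA : A.Infinite) :
    ∃ (x : ℕ → K) (O : ℕ → Set K), (∀ n, x n ∈ A) ∧ (∀ n, IsOpen (O n)) ∧
      (∀ n, x n ∈ O n) ∧ Pairwise (Function.onFun Disjoint O) := by
  classical
  -- an accumulation point of A
  obtain ⟨z, hz⟩ : ∃ z : K, ∀ U : Set K, IsOpen U → z ∈ U → ∃ a, a ∈ A ∧ a ∈ U ∧ a ≠ z := by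
    set e : ℕ ↪ ↥A := hA.natEmbedding with he
    have hne : (Filter.map (fun n => (e n : K)) Filter.atTop).NeBot := Filter.map_neBot
    obtain ⟨z, -, hz⟩ := isCompact_univ.exists_clusterPt
      (f := Filter.map (fun n => (e n : K)) Filter.atTop) (le_principal_iff.2 univ_mem)
    refine ⟨z, fun U hU hzU => ?_⟩
    have hz' : MapClusterPt z Filter.atTop (fun n => (e n : K)) := hz
    have hfreq : ∃ᶠ n in Filter.atTop, (e n : K) ∈ U :=
      (mapClusterPt_iff_frequently.mp hz') U (hU.mem_nhds hzU)
    rw [Filter.frequently_atTop] at hfreq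
    obtain ⟨n, -, hn⟩ := hfreq 0
    obtain ⟨m, hm, hmU⟩ := hfreq (n + 1)
    have hnm : (e n : K) ≠ (e m : K) := by
      intro h
      have : e n = e m := Subtype.coe_injective h
      have := e.injective this
      omega
    by_cases hcase : (e n : K) = z
    · exact ⟨(e m : K), (e m).2, hmU, by rw [← hcase]; exact fun h => hnm h.symm⟩
    · exact ⟨(e n : K), (e n).2, hn, hcase⟩
  -- step
  have step : ∀ U : Set K, IsOpen U → z ∈ U →
      ∃ (a : K) (O W : Set K), a ∈ A ∧ IsOpen O ∧ a ∈ O ∧ IsOpen W ∧ z ∈ W ∧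
        O ⊆ U ∧ W ⊆ U ∧ Disjoint O W := by
    intro U hU hzU
    obtain ⟨a, haA, haU, haz⟩ := hz U hU hzU
    obtain ⟨V, W, hV, hW, haV, hzW, hVW⟩ := t2_separation haz
    exact ⟨a, V ∩ U, W ∩ U, haA, hV.inter hU, ⟨haV, haU⟩, hW.inter hU, ⟨hzW, hzU⟩,
      inter_subset_right, inter_subset_right,
      hVW.mono inter_subset_left inter_subset_left⟩
  choose pt Ofn Wfn hptA hOopen hptO hWopen hzW hOU hWU hOW using step
  -- chain of neighborhoods of z
  let chain : ℕ → {U : Set K // IsOpen U ∧ z ∈ U} :=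
    Nat.rec ⟨Set.univ, isOpen_univ, trivial⟩
      (fun _ p => ⟨Wfn p.1 p.2.1 p.2.2, hWopen p.1 p.2.1 p.2.2, hzW p.1 p.2.1 p.2.2⟩)
  have hchain_succ : ∀ n, (chain (n + 1)).1 ⊆ (chain n).1 := fun n =>
    hWU (chain n).1 (chain n).2.1 (chain n).2.2
  have hchain_mono : ∀ m n, m ≤ n → (chain n).1 ⊆ (chain m).1 := by
    intro m n hmn
    induction n with
    | zero => cases Nat.le_zero.mp hmn; exact le_rfl
    | succ k ih =>
      rcases Nat.lt_or_ge m (k+1) with h | h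
      · exact (hchain_succ k).trans (ih (Nat.lt_succ_iff.mp h))
      · cases Nat.le_antisymm hmn h; exact le_rfl
  refine ⟨fun n => pt (chain n).1 (chain n).2.1 (chain n).2.2,
    fun n => Ofn (chain n).1 (chain n).2.1 (chain n).2.2,
    fun n => hptA _ _ _, fun n => hOopen _ _ _, fun n => hptO _ _ _, ?_⟩
  have key : ∀ m n, m < n → Disjoint (Ofn (chain m).1 (chain m).2.1 (chain m).2.2)
      (Ofn (chain n).1 (chain n).2.1 (chain n).2.2) := by
    intro m n hmn
    have h1 : (Ofn (chain n).1 (chain n).2.1 (chain n).2.2) ⊆ (chain (m+1)).1 :=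
      (hOU (chain n).1 (chain n).2.1 (chain n).2.2).trans (hchain_mono (m+1) n hmn)
    exact ((hOW (chain m).1 (chain m).2.1 (chain m).2.2).mono_right h1).symm.symm
  intro m n hmn
  rcases Nat.lt_or_ge m n with h | h
  · exact key m n h
  · exact (key n m (lt_of_le_of_ne h (Ne.symm hmn))).symm

section core
variable {K : Type} [TopologicalSpace K] [CompactSpace K] [T2Space K]
variable {E : Type} [NormedAddCommGroup E] [Lattice E] [IsOrderedAddMonoid E] [HasSolidNorm E]
  [NormedSpace ℝ E]
variable (T : C(K, ℝ) →ₗ[ℝ] E)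

theorem Tmono (hsup : ∀ f g : C(K, ℝ), T (f ⊔ g) = T f ⊔ T g)
    {f g : C(K, ℝ)} (h : f ≤ g) : T f ≤ T g := by
  have h1 : f ⊔ g = g := sup_eq_right.mpr h
  have := hsup f g
  rw [h1] at this
  exact sup_eq_right.mp this.symm

theorem Treflect (hinj : Function.Injective T)
    (hsup : ∀ f g : C(K, ℝ), T (f ⊔ g) = T f ⊔ T g)
    {f g : C(K, ℝ)} (h : T f ≤ T g) : f ≤ g := by
  have h1 : T (f ⊔ g) = T g := by rw [hsup, sup_eq_right.mpr h]
  exact sup_eq_right.mp (hinj h1)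

theorem Tinf (hsup : ∀ f g : C(K, ℝ), T (f ⊔ g) = T f ⊔ T g)
    (f g : C(K, ℝ)) : T (f ⊓ g) = T f ⊓ T g := by
  have h1 : f ⊓ g = -(-f ⊔ -g) := by rw [neg_sup, neg_neg, neg_neg]
  rw [h1, map_neg, hsup, map_neg, map_neg, neg_sup, neg_neg, neg_neg]

theorem Tsolid (hsup : ∀ f g : C(K, ℝ), T (f ⊔ g) = T f ⊔ T g)
    {f g : C(K, ℝ)} (hf : 0 ≤ f) (hfg : f ≤ g) : ‖T f‖ ≤ ‖T g‖ := by
  have h0 : (0 : E) ≤ T f := by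
    have := Tmono T hsup hf; rwa [map_zero] at this
  have h1 : T f ≤ T g := Tmono T hsup hfg
  refine HasSolidNorm.solid ?_
  rw [abs_of_nonneg h0]
  exact h1.trans (le_abs_self _)

end core

section core2
variable {K : Type} [TopologicalSpace K] [CompactSpace K] [T2Space K]
variable {E : Type} [NormedAddCommGroup E] [Lattice E] [IsOrderedAddMonoid E] [HasSolidNorm E]
  [NormedSpace ℝ E]
variable (T : C(K, ℝ) →ₗ[ℝ] E)

/-- Membership in the "unit ball" `B`. -/
def memB (f : C(K, ℝ)) : Prop := (∀ t : K, 0 ≤ f t) ∧ (∀ t : K, f t ≤ 1)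

theorem cutlemma (hsup : ∀ f g : C(K, ℝ), T (f ⊔ g) = T f ⊔ T g)
    {x : K} {δ : ℝ} (hδ : 0 < δ)
    (hx : ∀ f : C(K, ℝ), memB f → f x = 1 → δ ≤ ‖T f‖)
    {a b : C(K, ℝ)} (ha : memB a) (hb : memB b)
    (hval : (1:ℝ)/2 ≤ a x - b x) (hclose : ‖T a - T b‖ < δ/4) : False := by
  classical
  set h : C(K, ℝ) := (a - b) ⊔ 0 with hh
  have happ : ∀ t, h t = (a t - b t) ⊔ 0 := by
    intro t
    rw [hh, ContinuousMap.sup_apply, ContinuousMap.sub_apply, ContinuousMap.zero_apply]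
  have hhx : (1:ℝ)/2 ≤ h x := by
    rw [happ]; exact le_sup_of_le_left hval
  set k : C(K, ℝ) := (((4:ℝ) • h - 1) ⊔ 0) ⊓ 1 with hk
  have kapp : ∀ t, k t = ((4 * h t - 1) ⊔ 0) ⊓ 1 := by
    intro t
    rw [hk, ContinuousMap.inf_apply, ContinuousMap.sup_apply, ContinuousMap.sub_apply,
      ContinuousMap.smul_apply, ContinuousMap.zero_apply, ContinuousMap.one_apply,
      smul_eq_mul]
  have hkB : memB k := by
    constructor
    · intro t; rw [kapp]
      exact le_inf le_sup_right zero_le_one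
    · intro t; rw [kapp]; exact inf_le_right
  have hkx : k x = 1 := by
    rw [kapp x]
    have h1' : (1:ℝ) ≤ 4 * h x - 1 := by linarith
    have h2' : (4 * h x - 1) ⊔ (0:ℝ) = 4 * h x - 1 :=
      sup_eq_left.mpr (le_trans zero_le_one h1')
    rw [h2']
    exact inf_eq_right.mpr h1'
  have h1 : δ ≤ ‖T k‖ := hx k hkB hkx
  have hk0 : (0:C(K,ℝ)) ≤ k := by
    rw [ContinuousMap.le_def]; intro t
    rw [ContinuousMap.zero_apply, kapp]
    exact le_inf le_sup_right zero_le_one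
  have hk4h : k ≤ (4:ℝ) • h := by
    rw [ContinuousMap.le_def]; intro t
    rw [kapp, ContinuousMap.smul_apply, smul_eq_mul]
    have h0t : (0:ℝ) ≤ h t := by rw [happ]; exact le_sup_right
    refine le_trans inf_le_left (sup_le (by linarith) (by linarith))
  have h2 : ‖T k‖ ≤ ‖T ((4:ℝ) • h)‖ := Tsolid T hsup hk0 hk4h
  have h3 : ‖T ((4:ℝ) • h)‖ = 4 * ‖T h‖ := by
    rw [_root_.map_smul, norm_smul]
    simp
  set dd : C(K, ℝ) := (a - b) ⊔ (b - a) with hdd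
  have hhdd : h ≤ dd := by
    rw [ContinuousMap.le_def]; intro t
    rw [happ, hdd, ContinuousMap.sup_apply, ContinuousMap.sub_apply, ContinuousMap.sub_apply]
    have h0 : (0:ℝ) ≤ (a t - b t) ⊔ (b t - a t) := by
      rcases le_total (a t) (b t) with hle | hle
      · exact le_sup_of_le_right (by linarith)
      · exact le_sup_of_le_left (by linarith)
    exact sup_le le_sup_left h0
  have hh0 : (0:C(K,ℝ)) ≤ h := by
    rw [ContinuousMap.le_def]; intro t
    rw [happ, ContinuousMap.zero_apply]; exact le_sup_right
  have h4 : ‖T h‖ ≤ ‖T dd‖ := Tsolid T hsup hh0 hhdd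
  have h5 : T dd = |T a - T b| := by
    rw [hdd, hsup, map_sub, map_sub, ← neg_sub (T a) (T b)]
    rfl
  have h6 : ‖T dd‖ = ‖T a - T b‖ := by rw [h5, norm_abs_eq_norm]
  linarith
theorem KQ (hsup : ∀ f g : C(K, ℝ), T (f ⊔ g) = T f ⊔ T g)
    {D : Type} (q : D → C(K, ℝ)) (hqB : ∀ d, memB (q d))
    (hQd : ∀ f : C(K,ℝ), memB f → ∀ ε : ℝ, 0 < ε → ∃ d, ‖T f - T (q d)‖ < ε)
    {x y : K}
    (hx : ∃ δ : ℝ, 0 < δ ∧ ∀ f : C(K,ℝ), memB f → f x = 1 → δ ≤ ‖T f‖)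
    (hy : ∃ δ : ℝ, 0 < δ ∧ ∀ f : C(K,ℝ), memB f → f y = 1 → δ ≤ ‖T f‖)
    (hqxy : ∀ d, q d x = q d y) : x = y := by
  by_contra hne
  obtain ⟨δx, hδx, hxw⟩ := hx
  obtain ⟨δy, hδy, hyw⟩ := hy
  obtain ⟨f, hf0, hf1, hfIcc⟩ := exists_continuous_zero_one_of_isClosed
      (isClosed_singleton (x := y)) (isClosed_singleton (x := x))
      (Set.disjoint_singleton.mpr (Ne.symm hne))
  have hfy : f y = 0 := by simpa using hf0 (Set.mem_singleton y)
  have hfx : f x = 1 := by simpa using hf1 (Set.mem_singleton x)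
  have hfB : memB f := ⟨fun t => (hfIcc t).1, fun t => (hfIcc t).2⟩
  set δ := min δx δy with hδdef
  have hδ : 0 < δ := lt_min hδx hδy
  obtain ⟨d, hd⟩ := hQd f hfB (δ/4) (by positivity)
  have hc1 : 1/2 < q d x := by
    by_contra hcon
    push_neg at hcon
    refine cutlemma T hsup hδx hxw hfB (hqB d) ?_ ?_
    · rw [hfx]; linarith
    · calc ‖T f - T (q d)‖ < δ/4 := hd
        _ ≤ δx/4 := by have := min_le_left δx δy; rw [← hδdef] at this; linarith
  have hc2 : q d y < 1/2 := by
    by_contra hcon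
    push_neg at hcon
    refine cutlemma T hsup hδy hyw (hqB d) hfB ?_ ?_
    · rw [hfy]; linarith
    · rw [norm_sub_rev]
      calc ‖T f - T (q d)‖ < δ/4 := hd
        _ ≤ δy/4 := by have := min_le_right δx δy; rw [← hδdef] at this; linarith
  have := hqxy d
  linarith

theorem null_points_infinite
    (hsup : ∀ f g : C(K, ℝ), T (f ⊔ g) = T f ⊔ T g)
    {D : Type} [Countable D] (q : D → C(K, ℝ)) (hqB : ∀ d, memB (q d))
    (hQd : ∀ f : C(K,ℝ), memB f → ∀ ε : ℝ, 0 < ε → ∃ d, ‖T f - T (q d)‖ < ε)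
    {S : Set K} (hS : IsClosed S) (hnm : ¬ TopologicalSpace.MetrizableSpace S) :
    {z : K | z ∈ S ∧ ∀ δ : ℝ, 0 < δ →
      ∃ f : C(K,ℝ), memB f ∧ f z = 1 ∧ ‖T f‖ < δ}.Infinite := by
  classical
  set Nn : K → Prop :=
    fun z => ∀ δ : ℝ, 0 < δ → ∃ f : C(K,ℝ), memB f ∧ f z = 1 ∧ ‖T f‖ < δ with hNn
  by_contra hfin
  rw [Set.not_infinite] at hfin
  have hnonnull : ∀ z : K, ¬ Nn z →
      ∃ δ : ℝ, 0 < δ ∧ ∀ f : C(K,ℝ), memB f → f z = 1 → δ ≤ ‖T f‖ := by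
    intro z hz
    have hz' : ¬ ∀ δ : ℝ, 0 < δ → ∃ f : C(K,ℝ), memB f ∧ f z = 1 ∧ ‖T f‖ < δ := hz
    push_neg at hz'
    obtain ⟨δ, hδ, hall⟩ := hz'
    exact ⟨δ, hδ, hall⟩
  set F := {z : K | z ∈ S ∧ Nn z} with hF
  set fib : K → Set K := fun w => {z | z ∈ S ∧ ∀ d, q d z = q d w} with hfib
  have hfibfin : ∀ w, (fib w).Finite := by
    intro w
    have hsub : fib w ⊆ F ∪ {z | z ∈ fib w ∧ ¬ Nn z} := by
      intro z hzf
      by_cases hz : Nn z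
      · exact Or.inl ⟨hzf.1, hz⟩
      · exact Or.inr ⟨hzf, hz⟩
    refine Set.Finite.subset (hfin.union ?_) hsub
    refine Set.Subsingleton.finite ?_
    intro z1 h1 z2 h2
    refine KQ T hsup q hqB hQd (hnonnull z1 h1.2) (hnonnull z2 h2.2) (fun d => ?_)
    rw [h1.1.2 d, h2.1.2 d]
  set G := ⋃ w ∈ F, fib w with hG
  have hGfin : G.Finite := Set.Finite.biUnion hfin (fun w _ => hfibfin w)
  haveI : Finite ↥G := hGfin.to_subtype
  have hury : ∀ a b : K, a ≠ b → ∃ f : C(K,ℝ), f a = 1 ∧ f b = 0 := by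
    intro a b hab
    obtain ⟨f, hf0, hf1, hfIcc⟩ := exists_continuous_zero_one_of_isClosed
      (isClosed_singleton (x := b)) (isClosed_singleton (x := a))
      (Set.disjoint_singleton.mpr (Ne.symm hab))
    exact ⟨f, by simpa using hf1 (Set.mem_singleton a), by simpa using hf0 (Set.mem_singleton b)⟩
  haveI : CompactSpace ↥S := isCompact_iff_compactSpace.mp (hS.isCompact)
  set Ffam : (D ⊕ (↥G × ↥G)) → ↥S → ℝ :=
    Sum.elim (fun d s => q d s.1)
      (fun p s => if h : (p.1 : K) ≠ (p.2 : K) then (hury _ _ h).choose s.1 else 0) with hFfam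
  have hcont : ∀ i, Continuous (Ffam i) := by
    rintro (d | p)
    · exact (q d).continuous.comp continuous_subtype_val
    · by_cases h : (p.1 : K) ≠ (p.2 : K)
      · simp only [hFfam, Sum.elim_inr, dif_pos h]
        exact (hury _ _ h).choose.continuous.comp continuous_subtype_val
      · simp only [hFfam, Sum.elim_inr, dif_neg h]
        exact continuous_const
  have hsep : ∀ s1 s2 : ↥S, (∀ i, Ffam i s1 = Ffam i s2) → s1 = s2 := by
    intro s1 s2 hall
    have hq12 : ∀ d, q d s1.1 = q d s2.1 := fun d => hall (Sum.inl d)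
    have key : ∀ (w : K), w ∈ S → Nn w → (∀ d, q d s1.1 = q d w) → s1 = s2 := by
      intro w hwS hwN hqw
      have hs1G : s1.1 ∈ G := by
        rw [hG]
        exact Set.mem_biUnion (⟨hwS, hwN⟩ : w ∈ F) ⟨s1.2, hqw⟩
      have hs2G : s2.1 ∈ G := by
        rw [hG]
        exact Set.mem_biUnion (⟨hwS, hwN⟩ : w ∈ F) ⟨s2.2, fun d => (hq12 d).symm.trans (hqw d)⟩
      by_contra hne
      set a : ↥G := ⟨s1.1, hs1G⟩ with hadef
      set b : ↥G := ⟨s2.1, hs2G⟩ with hbdef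
      have hne' : (a : K) ≠ (b : K) := fun h => hne (Subtype.ext h)
      have heq := hall (Sum.inr (a, b))
      simp only [hFfam, Sum.elim_inr] at heq
      simp only [dif_pos hne'] at heq
      have e1 : (hury (a : K) (b : K) hne').choose (s1.1 : K) = 1 :=
        (hury (a : K) (b : K) hne').choose_spec.1
      have e2 : (hury (a : K) (b : K) hne').choose (s2.1 : K) = 0 :=
        (hury (a : K) (b : K) hne').choose_spec.2
      rw [e1, e2] at heq
      exact one_ne_zero heq
    by_cases h1 : Nn s1.1
    · exact key s1.1 s1.2 h1 (fun d => rfl)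
    · by_cases h2 : Nn s2.1
      · exact key s2.1 s2.2 h2 hq12
      · exact Subtype.ext (KQ T hsup q hqB hQd (hnonnull _ h1) (hnonnull _ h2) hq12)
  exact hnm (metrizable_of_sep Ffam hcont hsep)
end core2


/-- A compact Hausdorff space `K` is *sick* if there are a separable Banach lattice `E`,
a positive `u : E`, and an injective linear lattice homomorphism `T : C(K, ℝ) → E` with
`T 1 = u` whose range is the principal ideal generated by `u`. -/
def IsSick (K : Type*) [TopologicalSpace K] : Prop :=
  ∃ (E : Type) (_ : NormedAddCommGroup E) (_ : Lattice E) (_ : IsOrderedAddMonoid E)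
    (_ : HasSolidNorm E) (_ : NormedSpace ℝ E) (_ : PosSMulStrictMono ℝ E) (_ : PosSMulReflectLT ℝ E)
    (_ : CompleteSpace E) (_ : TopologicalSpace.SeparableSpace E)
    (u : E) (T : C(K, ℝ) →ₗ[ℝ] E),
    0 ≤ u ∧ Function.Injective T ∧
      (∀ f g : C(K, ℝ), T (f ⊔ g) = T f ⊔ T g) ∧
      T 1 = u ∧
      Set.range T = {y : E | ∃ r : ℝ, 0 < r ∧ |y| ≤ r • u}

/-- In a sick compactum, every nonmetrizable closed subspace contains a homeomorphic copy
of `βℕ`. -/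
theorem stmt_13 (K : Type) [TopologicalSpace K] [CompactSpace K] [T2Space K]
    (hK : IsSick K) (S : Set K) (hS : IsClosed S)
    (hnm : ¬ TopologicalSpace.MetrizableSpace S) :
    ∃ e : StoneCech ℕ → ↥S, Topology.IsEmbedding e := by
  classical
  obtain ⟨E, _i1, _i2, _i3, _i4, _i5, _i6, _i7, _i8, _i9, u, T, hu, hinj, hsup, hT1, hrange⟩ := hK
  -- countable family of elements of the unit ball of C(K) which is ‖T ·‖-dense
  haveI : SecondCountableTopology E := UniformSpace.secondCountable_of_separable E
  set M : Set E := T '' {f | memB f} with hM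
  obtain ⟨D0, hD0c, hD0d⟩ := TopologicalSpace.exists_countable_dense ↥M
  haveI : Countable ↥D0 := hD0c.to_subtype
  have hpre : ∀ d : ↥D0, ∃ f : C(K,ℝ), memB f ∧ T f = ((d : ↥M) : E) := by
    intro d
    obtain ⟨f, hf, hTf⟩ := (d : ↥M).2
    exact ⟨f, hf, hTf⟩
  choose q hqB hqT using hpre
  have hQd : ∀ f : C(K,ℝ), memB f → ∀ ε : ℝ, 0 < ε → ∃ d : ↥D0, ‖T f - T (q d)‖ < ε := by
    intro f hf ε hε
    have hm : T f ∈ M := ⟨f, hf, rfl⟩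
    have := Metric.dense_iff.mp hD0d ⟨T f, hm⟩ ε hε
    obtain ⟨y, hy1, hy2⟩ := this
    refine ⟨⟨y, hy2⟩, ?_⟩
    have hdist : dist (⟨T f, hm⟩ : ↥M) y < ε := by
      rw [dist_comm]; exact Metric.mem_ball.mp hy1
    rw [Subtype.dist_eq] at hdist
    rw [hqT ⟨y, hy2⟩]
    rw [← dist_eq_norm]
    exact hdist
  -- infinitely many null points in S
  have hNinf := null_points_infinite T hsup q hqB hQd hS hnm
  obtain ⟨x, O, hxA, hOopen, hxO, hdisj⟩ := exists_discrete_seq hNinf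
  have hxS : ∀ n, x n ∈ S := fun n => (hxA n).1
  -- small functions at the null points
  have hfex : ∀ n : ℕ, ∃ f : C(K,ℝ), memB f ∧ f (x n) = 1 ∧ ‖T f‖ < (1/2:ℝ)^n :=
    fun n => (hxA n).2 ((1/2:ℝ)^n) (by positivity)
  choose f hfB hfx hfnorm using hfex
  -- cutoffs supported in the disjoint opens
  have hφex : ∀ n : ℕ, ∃ φ : C(K,ℝ), memB φ ∧ φ (x n) = 1 ∧ ∀ t, t ∉ O n → φ t = 0 := by
    intro n
    obtain ⟨φ, h0, h1, hIcc⟩ := exists_continuous_zero_one_of_isClosed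
      (isClosed_compl_iff.mpr (hOopen n)) (isClosed_singleton (x := x n))
      (Set.disjoint_singleton_right.mpr (fun hc => hc (hxO n)))
    refine ⟨φ, ⟨fun t => (hIcc t).1, fun t => (hIcc t).2⟩,
      by simpa using h1 (Set.mem_singleton _), fun t ht => by simpa using h0 ht⟩
  choose φ hφB hφx hφ0 using hφex
  set g : ℕ → C(K,ℝ) := fun n => f n ⊓ φ n with hgdef
  have hgapp : ∀ n t, g n t = f n t ⊓ φ n t := by
    intro n t; rw [hgdef]; exact ContinuousMap.inf_apply _ _ t
  have hgB : ∀ n, memB (g n) := by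
    intro n
    constructor
    · intro t; rw [hgapp]; exact le_inf ((hfB n).1 t) ((hφB n).1 t)
    · intro t; rw [hgapp]; exact le_trans inf_le_left ((hfB n).2 t)
  have hgx : ∀ n, g n (x n) = 1 := by
    intro n; rw [hgapp, hfx n, hφx n]; exact inf_idem 1
  have hg0 : ∀ n, (0:C(K,ℝ)) ≤ g n := by
    intro n; rw [ContinuousMap.le_def]; intro t
    rw [ContinuousMap.zero_apply]; exact ((hgB n).1 t)
  have hgf : ∀ n, g n ≤ f n := by
    intro n; rw [ContinuousMap.le_def]; intro t
    rw [hgapp]; exact inf_le_left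
  have hgnorm : ∀ n, ‖T (g n)‖ ≤ (1/2:ℝ)^n :=
    fun n => le_of_lt (lt_of_le_of_lt (Tsolid T hsup (hg0 n) (hgf n)) (hfnorm n))
  have hgdisj : ∀ m n, m ≠ n → ∀ t, g m t = 0 ∨ g n t = 0 := by
    intro m n hmn t
    by_cases ht : t ∈ O m
    · right
      have htn : t ∉ O n := fun h2 => Set.disjoint_left.mp (hdisj hmn) ht h2
      rw [hgapp, hφ0 n t htn]
      exact inf_eq_right.mpr ((hfB n).1 t)
    · left
      rw [hgapp, hφ0 m t ht]
      exact inf_eq_right.mpr ((hfB m).1 t)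
  -- the main construction : continuous indicator-like functions for each A ⊆ ℕ
  have main : ∀ A : Set ℕ, ∃ gA : C(K,ℝ),
      (∀ n, n ∈ A → 1 ≤ gA (x n)) ∧ (∀ m, m ∉ A → gA (x m) = 0) := by
    intro A
    set c : ℕ → E := fun n => if n ∈ A then T (g n) else 0 with hc
    have hcnorm : ∀ n, ‖c n‖ ≤ (1/2:ℝ)^n := by
      intro n; simp only [hc]
      by_cases h : n ∈ A
      · rw [if_pos h]; exact hgnorm n
      · rw [if_neg h]; rw [norm_zero]; positivity
    have hcsum : Summable c :=
      Summable.of_norm_bounded (summable_geometric_of_lt_one (by norm_num) (by norm_num)) hcnorm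
    have hc0 : ∀ n, 0 ≤ c n := by
      intro n; simp only [hc]
      by_cases h : n ∈ A
      · rw [if_pos h]
        have := Tmono T hsup (hg0 n); rwa [map_zero] at this
      · rw [if_neg h]
    set w := ∑' n, c n with hw
    have hsumto : Filter.Tendsto (fun s : Finset ℕ => ∑ n ∈ s, c n) Filter.atTop (nhds w) :=
      hcsum.hasSum
    set Gs : Finset ℕ → C(K,ℝ) := fun s => ∑ n ∈ s, (if n ∈ A then g n else 0) with hGsdef
    have hTGs : ∀ s, T (Gs s) = ∑ n ∈ s, c n := by
      intro s; rw [hGsdef, map_sum]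
      refine Finset.sum_congr rfl (fun n _ => ?_)
      by_cases h : n ∈ A
      · rw [if_pos h, hc]; simp only [if_pos h]
      · rw [if_neg h, hc]; simp only [if_neg h, map_zero]
    have hGs_apply : ∀ s (t : K), Gs s t = ∑ n ∈ s, (if n ∈ A then g n t else 0) := by
      intro s t; rw [hGsdef, ContinuousMap.sum_apply]
      refine Finset.sum_congr rfl (fun n _ => ?_)
      by_cases h : n ∈ A
      · rw [if_pos h, if_pos h]
      · rw [if_neg h, if_neg h, ContinuousMap.zero_apply]
    have hterm0 : ∀ (t : K) n, (0:ℝ) ≤ if n ∈ A then g n t else 0 := by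
      intro t n
      by_cases h : n ∈ A
      · rw [if_pos h]; exact (hgB n).1 t
      · rw [if_neg h]
    have hGs1 : ∀ s, Gs s ≤ 1 := by
      intro s; rw [ContinuousMap.le_def]; intro t
      rw [hGs_apply, ContinuousMap.one_apply]
      by_cases hex : ∃ m, m ∈ s ∧ m ∈ A ∧ 0 < g m t
      · obtain ⟨m, hms, hmA, hmt⟩ := hex
        have hsingle : ∑ n ∈ s, (if n ∈ A then g n t else 0) = if m ∈ A then g m t else 0 := by
          refine Finset.sum_eq_single_of_mem m hms (fun n hns hnm => ?_)
          by_cases h : n ∈ A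
          · rw [if_pos h]
            rcases hgdisj n m hnm t with h0 | h0
            · exact h0
            · exact absurd h0 (ne_of_gt hmt)
          · rw [if_neg h]
        rw [hsingle, if_pos hmA]
        exact (hgB m).2 t
      · push_neg at hex
        have hz : ∀ n ∈ s, (if n ∈ A then g n t else 0) = 0 := by
          intro n hns
          by_cases h : n ∈ A
          · rw [if_pos h]
            exact le_antisymm (hex n hns h) ((hgB n).1 t)
          · rw [if_neg h]
        rw [Finset.sum_eq_zero hz]
        norm_num
    have hwu : w ≤ u := by
      refine le_of_tendsto' hsumto (fun s => ?_)
      rw [← hTGs]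
      calc T (Gs s) ≤ T 1 := Tmono T hsup (hGs1 s)
        _ = u := hT1
    have hw0 : (0:E) ≤ w := tsum_nonneg hc0
    have hmemw : w ∈ Set.range T := by
      rw [hrange]
      exact ⟨1, one_pos, by rw [abs_of_nonneg hw0, one_smul]; exact hwu⟩
    obtain ⟨gA, hgA⟩ := hmemw
    have hgA0 : (0:C(K,ℝ)) ≤ gA := by
      refine Treflect T hinj hsup ?_
      rw [map_zero, hgA]; exact hw0
    refine ⟨gA, fun n hn => ?_, fun m hm => ?_⟩
    · have h1 : c n ≤ w := Summable.le_tsum hcsum n (fun j _ => hc0 j)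
      have h2 : T (g n) ≤ T gA := by
        rw [hgA]
        have h3 : c n = T (g n) := by rw [hc]; simp only [if_pos hn]
        rw [← h3]; exact h1
      have h3 : g n ≤ gA := Treflect T hinj hsup h2
      have h4 := ContinuousMap.le_def.mp h3 (x n)
      rwa [hgx n] at h4
    · have hinfz : ∀ s, T (Gs s) ⊓ T (g m) = 0 := by
        intro s
        rw [← Tinf T hsup]
        have hGsm : Gs s ⊓ g m = 0 := by
          ext t
          rw [ContinuousMap.inf_apply, ContinuousMap.zero_apply, hGs_apply]
          by_cases hgmt : 0 < g m t
          · have hz : ∀ n ∈ s, (if n ∈ A then g n t else 0) = 0 := by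
              intro n hns
              by_cases h : n ∈ A
              · rw [if_pos h]
                rcases hgdisj n m (fun hnm => hm (hnm ▸ h)) t with h0 | h0
                · exact h0
                · exact absurd h0 (ne_of_gt hgmt)
              · rw [if_neg h]
            rw [Finset.sum_eq_zero hz]
            exact inf_eq_left.mpr (le_of_lt hgmt)
          · have h0 : g m t = 0 := le_antisymm (not_lt.mp hgmt) ((hgB m).1 t)
            rw [h0]
            exact inf_eq_right.mpr (Finset.sum_nonneg (fun n _ => hterm0 t n))
        rw [hGsm, map_zero]
      have htend : Filter.Tendsto (fun s : Finset ℕ => T (Gs s) ⊓ T (g m))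
          Filter.atTop (nhds (w ⊓ T (g m))) := by
        have hcont2 : Continuous (fun z : E => z ⊓ T (g m)) := continuous_id.inf continuous_const
        have h5 := (hcont2.tendsto w).comp hsumto
        refine h5.congr (fun s => ?_)
        simp only [Function.comp_apply]
        rw [hTGs]
      have hlim0 : w ⊓ T (g m) = 0 := by
        have h6 : Filter.Tendsto (fun _ : Finset ℕ => (0:E)) Filter.atTop (nhds (w ⊓ T (g m))) :=
          htend.congr (fun s => hinfz s)
        exact (tendsto_nhds_unique h6 tendsto_const_nhds)
      have h7 : T (gA ⊓ g m) = T 0 := by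
        rw [Tinf T hsup, hgA, hlim0, map_zero]
      have h8 : gA ⊓ g m = 0 := hinj h7
      have h9 : gA (x m) ⊓ g m (x m) = 0 := by
        have := congrArg (fun h : C(K,ℝ) => h (x m)) h8
        simpa [ContinuousMap.inf_apply] using this
      rw [hgx m] at h9
      by_contra hne0
      have hpos : 0 < gA (x m) :=
        lt_of_le_of_ne (ContinuousMap.le_def.mp hgA0 (x m)) (Ne.symm hne0)
      have : (0:ℝ) < gA (x m) ⊓ 1 := lt_inf_iff.mpr ⟨hpos, one_pos⟩
      rw [h9] at this
      exact lt_irrefl 0 this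
  -- Stone–Čech extension of the sequence x
  have hcontx : Continuous x := continuous_of_discreteTopology
  have hebn : ∀ n : ℕ, stoneCechExtend hcontx (stoneCechUnit n) = x n :=
    fun n => congrFun (stoneCechExtend_extends hcontx) n
  have hebS : ∀ z, stoneCechExtend hcontx z ∈ S := by
    intro z
    have hcl : IsClosed (stoneCechExtend hcontx ⁻¹' S) :=
      hS.preimage (continuous_stoneCechExtend hcontx)
    have hsub : Set.range (stoneCechUnit : ℕ → StoneCech ℕ) ⊆ stoneCechExtend hcontx ⁻¹' S := by
      rintro _ ⟨n, rfl⟩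
      simp only [Set.mem_preimage, hebn n]
      exact hxS n
    have hcs : closure (Set.range (stoneCechUnit : ℕ → StoneCech ℕ)) ⊆
        stoneCechExtend hcontx ⁻¹' S := hcl.closure_subset_iff.mpr hsub
    exact hcs (by rw [denseRange_stoneCechUnit.closure_range]; trivial)
  have hebinj : Function.Injective (stoneCechExtend hcontx) := by
    intro p p' hpp
    by_contra hne
    obtain ⟨h, hh0, hh1, hIcc⟩ := exists_continuous_zero_one_of_isClosed
      (isClosed_singleton (x := p)) (isClosed_singleton (x := p'))
      (Set.disjoint_singleton.mpr hne)
    have hhp : h p = 0 := by simpa using hh0 (Set.mem_singleton _)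
    have hhp' : h p' = 1 := by simpa using hh1 (Set.mem_singleton _)
    set A : Set ℕ := {n | h (stoneCechUnit n) < 1/2} with hA
    obtain ⟨gA, hgA1, hgA0⟩ := main A
    have hψ : Continuous (fun z => gA (stoneCechExtend hcontx z)) :=
      gA.continuous.comp (continuous_stoneCechExtend hcontx)
    have hp1 : 1 ≤ gA (stoneCechExtend hcontx p) := by
      have hclosed : IsClosed {z : StoneCech ℕ | 1 ≤ gA (stoneCechExtend hcontx z)} :=
        isClosed_le continuous_const hψ
      have hsub : stoneCechUnit '' A ⊆ {z | 1 ≤ gA (stoneCechExtend hcontx z)} := by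
        rintro _ ⟨n, hn, rfl⟩
        simp only [Set.mem_setOf_eq, hebn n]
        exact hgA1 n hn
      have hmem : p ∈ closure (stoneCechUnit '' A) := by
        rw [mem_closure_iff]
        intro o ho hpo
        have ho2 : IsOpen (o ∩ {z | h z < 1/2}) :=
          ho.inter (isOpen_lt h.continuous continuous_const)
        have hpo2 : p ∈ o ∩ {z | h z < 1/2} := ⟨hpo, by
          simp only [Set.mem_setOf_eq, hhp]; norm_num⟩
        obtain ⟨n, hn⟩ := denseRange_stoneCechUnit.exists_mem_open ho2 ⟨p, hpo2⟩
        exact ⟨stoneCechUnit n, hn.1, ⟨n, hn.2, rfl⟩⟩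
      exact (hclosed.closure_subset_iff.mpr hsub) hmem
    have hp0 : gA (stoneCechExtend hcontx p') ≤ 0 := by
      have hclosed : IsClosed {z : StoneCech ℕ | gA (stoneCechExtend hcontx z) ≤ 0} :=
        isClosed_le hψ continuous_const
      have hsub : stoneCechUnit '' Aᶜ ⊆ {z | gA (stoneCechExtend hcontx z) ≤ 0} := by
        rintro _ ⟨n, hn, rfl⟩
        simp only [Set.mem_setOf_eq, hebn n]
        rw [hgA0 n hn]
      have hmem : p' ∈ closure (stoneCechUnit '' Aᶜ) := by
        rw [mem_closure_iff]
        intro o ho hpo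
        have ho2 : IsOpen (o ∩ {z | 1/2 < h z}) :=
          ho.inter (isOpen_lt continuous_const h.continuous)
        have hpo2 : p' ∈ o ∩ {z | 1/2 < h z} := ⟨hpo, by
          simp only [Set.mem_setOf_eq, hhp']; norm_num⟩
        obtain ⟨n, hn⟩ := denseRange_stoneCechUnit.exists_mem_open ho2 ⟨p', hpo2⟩
        refine ⟨stoneCechUnit n, hn.1, ⟨n, ?_, rfl⟩⟩
        have := hn.2
        simp only [Set.mem_setOf_eq] at this
        simp only [hA, Set.mem_compl_iff, Set.mem_setOf_eq]
        linarith
      exact (hclosed.closure_subset_iff.mpr hsub) hmem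
    rw [hpp] at hp1
    linarith
  exact ⟨fun z => ⟨stoneCechExtend hcontx z, hebS z⟩,
    (((continuous_stoneCechExtend hcontx).subtype_mk hebS).isClosedEmbedding
      (fun a b hab => hebinj (congrArg Subtype.val hab))).isEmbedding⟩
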